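/- (Schur bounds for the tail matrix) With the hypotheses of the tail-matrix lemma — (𝓕, a, 𝒢) ℓ¹-localized with bounding sequence r ∈ ℓ¹(G), and K := sup_{k∈G}|a⁻¹(k)| < ∞ — the matrix M^R with entries ⟨f_i,g_k⟩ when ‖a(i)−k‖_∞ > R and 0 otherwise satisfies sup_{i∈I} ∑_{k∈G} |(M^R)_{i,k}| ≤ Δ_r(R) and sup_{k∈G} ∑_{i∈I} |(M^R)_{i,k}| ≤ K·Δ_r(R), where Δ_r(R) = ∑_{‖k‖_∞ > R} r(k). -/

import Mathlib

open Set
open scoped ENNReal NNReal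

/-!
Bound every entry of the tail matrix by `r (a i - k)`. In a row the substitution `m = a i - k`
turns the bound into exactly the tail `Δ_r(R)`. In a column, group the indices `i` by the value
`a i`: each fibre has at most `K` elements, so the column sum is at most `K` times a sum over `G`,
which the substitution `m = v - k` again turns into `Δ_r(R)`.
-/

section TailSums

variable {G : Type*} (p : G → Prop) [DecidablePred p] (r : G → ℝ≥0∞)

theorem tsum_ite_comp_equiv_eq_tsum_subtype (e : G ≃ G) :
    ∑' v, (if p (e v) then r (e v) else 0) = ∑' m : {m // p m}, r m := by
  rw [e.tsum_eq (fun m => if p m then r m else 0)]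
  exact (tsum_congr fun m => by rw [indicator_apply]; rfl).trans
    (tsum_subtype {m | p m} r).symm

theorem tsum_ite_sub_le_tsum_subtype [AddGroup G] (x : G) (F : G → ℝ≥0∞)
    (hF : ∀ k, F k ≤ r (x - k)) :
    ∑' k, (if p (x - k) then F k else 0) ≤ ∑' m : {m // p m}, r m :=
  calc ∑' k, (if p (x - k) then F k else 0)
      ≤ ∑' k, (if p (x - k) then r (x - k) else 0) :=
        ENNReal.tsum_le_tsum fun k => by split_ifs; exacts [hF k, le_rfl]
    _ = ∑' m : {m // p m}, r m := tsum_ite_comp_equiv_eq_tsum_subtype p r (Equiv.subLeft x)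

theorem tsum_comp_le_mul_tsum_of_encard_fiber_le {I : Type*} (a : I → G) {K : ℕ}
    (hK : ∀ v, (a ⁻¹' {v}).encard ≤ K) (H : G → ℝ≥0∞) :
    ∑' i, H (a i) ≤ K * ∑' v, H v := by
  rw [← (Equiv.sigmaFiberEquiv a).tsum_eq, ENNReal.tsum_sigma', ← ENNReal.tsum_mul_left]
  refine ENNReal.tsum_le_tsum fun v => ?_
  calc ∑' i : {i // a i = v}, H (a i) = ∑' _ : a ⁻¹' {v}, H v := tsum_congr fun i => by rw [i.2]
    _ = (a ⁻¹' {v}).encard * H v := ENNReal.tsum_set_const _ _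
    _ ≤ K * H v := by gcongr; exact_mod_cast hK v

theorem tsum_ite_comp_sub_le_mul_tsum_subtype [AddGroup G] {I : Type*} (a : I → G) {K : ℕ}
    (hK : ∀ v, (a ⁻¹' {v}).encard ≤ K) (k : G) (F : I → ℝ≥0∞)
    (hF : ∀ i, F i ≤ r (a i - k)) :
    ∑' i, (if p (a i - k) then F i else 0) ≤ K * ∑' m : {m // p m}, r m :=
  calc ∑' i, (if p (a i - k) then F i else 0)
      ≤ ∑' i, (if p (a i - k) then r (a i - k) else 0) :=
        ENNReal.tsum_le_tsum fun i => by split_ifs; exacts [hF i, le_rfl]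
    _ ≤ K * ∑' v, (if p (v - k) then r (v - k) else 0) :=
        tsum_comp_le_mul_tsum_of_encard_fiber_le a hK fun v => if p (v - k) then r (v - k) else 0
    _ = K * ∑' m : {m // p m}, r m :=
        congrArg _ (tsum_ite_comp_equiv_eq_tsum_subtype p r (Equiv.subRight k))

end TailSums

theorem tail_matrix_schur_bounds_general
    {E I : Type*} [NormedAddCommGroup E] [InnerProductSpace ℂ E] {d : ℕ}
    (f : I → E) (g : (Fin d → ℤ) → E) (a : I → (Fin d → ℤ))
    (r : (Fin d → ℤ) → ℝ≥0)
    (hloc : ∀ i k', ‖(inner ℂ (f i) (g k') : ℂ)‖₊ ≤ r (a i - k'))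
    (K : ℕ) (hK : ∀ k, (a ⁻¹' {k}).encard ≤ K) (R : ℕ) :
    (∀ i : I,
      (∑' k : Fin d → ℤ,
        (if ∃ j, (R : ℤ) < |a i j - k j| then (‖(inner ℂ (f i) (g k) : ℂ)‖₊ : ℝ≥0∞) else 0))
      ≤ ∑' k : {k : Fin d → ℤ // ∃ j, (R : ℤ) < |k j|}, (r k : ℝ≥0∞)) ∧
    (∀ k : Fin d → ℤ,
      (∑' i : I,
        (if ∃ j, (R : ℤ) < |a i j - k j| then (‖(inner ℂ (f i) (g k) : ℂ)‖₊ : ℝ≥0∞) else 0))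
      ≤ K * ∑' k : {k : Fin d → ℤ // ∃ j, (R : ℤ) < |k j|}, (r k : ℝ≥0∞)) := by
  let tail : (Fin d → ℤ) → Prop := fun m => ∃ j, (R : ℤ) < |m j|
  refine ⟨fun i => ?_, fun k => ?_⟩
  · exact tsum_ite_sub_le_tsum_subtype tail (fun m => r m) (a i) _
      fun k => by exact_mod_cast hloc i k
  · exact tsum_ite_comp_sub_le_mul_tsum_subtype tail (fun m => r m) a hK k _
      fun i => by exact_mod_cast hloc i k

/-- Schur bounds for the tail matrix: if `(𝓕,a,𝒢)` is `ℓ¹`-localized with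
bounding sequence `r` and `|a⁻¹(k)| ≤ K`, then the tail matrix `M^R` satisfies
`sup_i ∑_k |(M^R)_{i,k}| ≤ Δ_r(R)` and `sup_k ∑_i |(M^R)_{i,k}| ≤ K·Δ_r(R)`, where
`Δ_r(R) = ∑_{‖k‖_∞ > R} r k`. -/
theorem tail_matrix_schur_bounds
    {E I : Type*} [NormedAddCommGroup E] [InnerProductSpace ℂ E] {d : ℕ}
    (f : I → E) (g : (Fin d → ℤ) → E) (a : I → (Fin d → ℤ))
    (r : (Fin d → ℤ) → ℝ≥0) (hr : (∑' k, (r k : ℝ≥0∞)) < ⊤)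
    (hloc : ∀ i k', ‖(inner ℂ (f i) (g k') : ℂ)‖₊ ≤ r (a i - k'))
    (K : ℕ) (hK : ∀ k, (a ⁻¹' {k}).encard ≤ K) (R : ℕ) :
    (∀ i : I,
      (∑' k : Fin d → ℤ,
        (if ∃ j, (R : ℤ) < |a i j - k j| then (‖(inner ℂ (f i) (g k) : ℂ)‖₊ : ℝ≥0∞) else 0))
      ≤ ∑' k : {k : Fin d → ℤ // ∃ j, (R : ℤ) < |k j|}, (r k : ℝ≥0∞)) ∧
    (∀ k : Fin d → ℤ,
      (∑' i : I,
        (if ∃ j, (R : ℤ) < |a i j - k j| then (‖(inner ℂ (f i) (g k) : ℂ)‖₊ : ℝ≥0∞) else 0))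
      ≤ K * ∑' k : {k : Fin d → ℤ // ∃ j, (R : ℤ) < |k j|}, (r k : ℝ≥0∞)) :=
  tail_matrix_schur_bounds_general f g a r hloc K hK R
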